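/- Let k ≥ 2, ε > 0, 1 ≤ d ≤ k−1, n ≥ 1 and p ∈ Δ_k. If Y^n consists of n i.i.d. samples with distribution m = p Q_{k,ε,d}, then for every i ∈ {1,…,k} the variance of the empirical estimator is Var(p̂_i(Y^n)) = (1/n)(p_i + B)(A − p_i − B). -/

import Mathlib

open MeasureTheory ProbabilityTheory Filter Real
open scoped ENNReal NNReal

noncomputable section

/-- The probability simplex Δ_k ⊆ ℝ^k. -/
def simplex (k : ℕ) : Set (Fin k → ℝ) :=
  {p | (∀ i, 0 ≤ p i) ∧ ∑ i, p i = 1}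

/-- ε-local differential privacy for a Markov kernel from `Fin k` to `Y`. -/
def IsPrivate {Y : Type} [MeasurableSpace Y] {k : ℕ} (ε : ℝ) (Q : Kernel (Fin k) Y) : Prop :=
  IsMarkovKernel Q ∧
    ∀ S : Set Y, MeasurableSet S → ∀ x x' : Fin k,
      Q x S ≤ ENNReal.ofReal (Real.exp ε) * Q x' S

/-- The marginal distribution m = pQ of a privatized sample. -/
def marginal {Y : Type} [MeasurableSpace Y] {k : ℕ} (Q : Kernel (Fin k) Y)
    (p : Fin k → ℝ) : Measure Y :=
  ∑ i, ENNReal.ofReal (p i) • Q i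

/-- Worst-case ℓ_u^u risk of the mechanism `Q` with estimator `est` from `n` samples. -/
def risk {Y : Type} [MeasurableSpace Y] (k n : ℕ) (u : ℝ) (Q : Kernel (Fin k) Y)
    (est : (Fin n → Y) → Fin k → ℝ) : ℝ≥0∞ :=
  ⨆ p ∈ simplex k,
    ∫⁻ y, ENNReal.ofReal (∑ i, |est y i - p i| ^ u)
      ∂(Measure.pi fun _ : Fin n => marginal Q p)

/-- Minimax ℓ_u^u risk of the mechanism `Q` from `n` samples. -/
def minimaxRisk {Y : Type} [MeasurableSpace Y] (k n : ℕ) (u : ℝ) (Q : Kernel (Fin k) Y) : ℝ≥0∞ :=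
  ⨅ (est : (Fin n → Y) → Fin k → ℝ) (_ : Measurable est), risk k n u Q est

/-- Output alphabet Y_{k,d} : subsets of {1,…,k} of size d. -/
def Out (k d : ℕ) : Type := {S : Finset (Fin k) // S.card = d}

instance (k d : ℕ) : Fintype (Out k d) := Subtype.fintype _
instance (k d : ℕ) : MeasurableSpace (Out k d) := ⊤
instance (k d : ℕ) : MeasurableSingletonClass (Out k d) := ⟨fun _ => trivial⟩
instance (k d : ℕ) : DecidableEq (Out k d) := Subtype.instDecidableEq

/-- Q_{k,ε,d}(y|i). -/
def schemeP (k : ℕ) (ε : ℝ) (d : ℕ) (i : Fin k) (y : Out k d) : ℝ :=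
  (if i ∈ y.1 then Real.exp ε else 1) /
    ((k-1).choose (d-1) * Real.exp ε + (k-1).choose d)

/-- The scheme Q_{k,ε,d} as a Markov kernel. -/
def schemeKernel (k : ℕ) (ε : ℝ) (d : ℕ) : Kernel (Fin k) (Out k d) :=
  Kernel.ofFunOfCountable fun i =>
    ∑ y : Out k d, ENNReal.ofReal (schemeP k ε d i y) • Measure.dirac y

/-- Constant A of the empirical estimator. -/
def Aconst (k d : ℕ) (ε : ℝ) : ℝ :=
  (((k:ℝ)-1) * Real.exp ε + ((k:ℝ)-1)*((k:ℝ)-d)/d) / (((k:ℝ)-d)*(Real.exp ε - 1))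

/-- Constant B of the empirical estimator. -/
def Bconst (k d : ℕ) (ε : ℝ) : ℝ :=
  (((d:ℝ)-1) * Real.exp ε + ((k:ℝ)-d)) / (((k:ℝ)-d)*(Real.exp ε - 1))

/-- t_i(y^n): the number of privatized samples whose i-th coordinate is 1. -/
def tcount {k d n : ℕ} (i : Fin k) (y : Fin n → Out k d) : ℕ :=
  (Finset.univ.filter fun j => i ∈ (y j).1).card

/-- The empirical estimator p̂ under Q_{k,ε,d}. -/
def empEst (k d n : ℕ) (ε : ℝ) (y : Fin n → Out k d) (i : Fin k) : ℝ :=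
  Aconst k d ε * ((tcount i y : ℝ) / n) - Bconst k d ε

/-- Marginal probability (pQ_{k,ε,d})(y). -/
def margP (k : ℕ) (ε : ℝ) (d : ℕ) (p : Fin k → ℝ) (y : Out k d) : ℝ :=
  ∑ i, p i * schemeP k ε d i y

/-- Membership in D_{ε,E}: a finite-output ε-LDP scheme, given by the matrix
`q j v = Q(j|v)`, whose conditional probability ratios take only values 1 and e^ε. -/
def memDEE (k L : ℕ) (ε : ℝ) (q : Fin L → Fin k → ℝ) : Prop :=
  (∀ j v, 0 ≤ q j v) ∧ (∀ v, ∑ j, q j v = 1) ∧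
  (∀ j v v', q j v ≤ Real.exp ε * q j v') ∧
  (∀ j v, q j v / (⨅ v', q j v') ∈ ({1, Real.exp ε} : Set ℝ))

/-- q_j = (1/k) Σ_v q_{jv}. -/
def qrow {k L : ℕ} (q : Fin L → Fin k → ℝ) (j : Fin L) : ℝ :=
  (1/(k:ℝ)) * ∑ v, q j v

/-- A finite-output scheme (matrix) as a Markov kernel. -/
def matKernel (k L : ℕ) (q : Fin L → Fin k → ℝ) : Kernel (Fin k) (Fin L) :=
  Kernel.ofFunOfCountable fun v =>
    ∑ j, ENNReal.ofReal (q j v) • Measure.dirac j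

/-- C_u = E|X|^u for X standard normal. -/
def Cmom (u : ℝ) : ℝ := ∫ x, |x| ^ u ∂(gaussianReal 0 1)

/-- g(s) = (s e^ε + k − s)² / (s(k−s)). -/
def gfun (ε k s : ℝ) : ℝ := (s * Real.exp ε + k - s)^2 / (s * (k - s))

/-- d* is a minimizer of (d e^ε + k − d)²/(d(k−d)) over d ∈ {1,…,k−1}. -/
def IsOptDstar (k : ℕ) (ε : ℝ) (dstar : ℕ) : Prop :=
  dstar ∈ Finset.Icc 1 (k-1) ∧
    ∀ d ∈ Finset.Icc 1 (k-1), gfun ε k dstar ≤ gfun ε k d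

/-- M(k,ε). -/
def Mconst (k : ℕ) (ε : ℝ) (dstar : ℕ) : ℝ :=
  (((k:ℝ)-1)^2 / ((k:ℝ)^2 * (Real.exp ε - 1)^2)) * gfun ε k dstar

/-- The prior set P_n = {p ∈ Δ_k : ‖p − p_U‖₂ ≤ D/√n}. -/
def Pball (k : ℕ) (D : ℝ) (n : ℕ) : Set (Fin k → ℝ) :=
  {p | p ∈ simplex k ∧ Real.sqrt (∑ i, (p i - 1/(k:ℝ))^2) ≤ D / Real.sqrt n}

/-- The uniform distribution on P_n: normalized (k−1)-dimensional Hausdorff measure. -/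
def unifP (k : ℕ) (D : ℝ) (n : ℕ) : Measure (Fin k → ℝ) :=
  ((μH[((k:ℝ)-1)]) (Pball k D n))⁻¹ • (μH[((k:ℝ)-1)]).restrict (Pball k D n)

/-- Component-wise optimal Bayes ℓ_u^u risk for the finite-output scheme `q`,
with the uniform prior on P_n. -/
def bayesRisk (k L : ℕ) (u : ℝ) (q : Fin L → Fin k → ℝ) (D : ℝ) (n : ℕ) (i : Fin k) : ℝ≥0∞ :=
  ⨅ est : (Fin n → Fin L) → ℝ,
    ∫⁻ p, (∑ y : Fin n → Fin L,
        (∏ j, ENNReal.ofReal (∑ v, p v * q (y j) v)) *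
          ENNReal.ofReal (|est y - p i| ^ u))
      ∂(unifP k D n)

end

/-! Writing `t_i(yⁿ) = ∑ⱼ (yⱼ)ᵢ`, the coordinates `(Yⱼ)ᵢ` are i.i.d. Bernoulli with mean
`μ = m(i ∈ Y)`, so `Var(p̂ᵢ) = A² μ (1 - μ) / n`. The estimator is unbiased, `A μ - B = pᵢ`,
because already for every input `v` one has `A · Q(i ∈ Y | v) - B = 1[v = i]`; this follows
from counting the `d`-subsets containing `i`, resp. both `i` and `v`. Substituting `A μ = pᵢ + B`
gives the formula. -/

open Finset

namespace IID

variable {Y : Type*} [Fintype Y] {q : Y → ℝ} {n : ℕ}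

theorem sum_prod_mul_prod (q : Y → ℝ) (g : Fin n → Y → ℝ) :
    ∑ y : Fin n → Y, (∏ j, q (y j)) * ∏ j, g j (y j) = ∏ j, ∑ x, q x * g j x := by
  simp only [Fintype.prod_sum, ← prod_mul_distrib]

theorem sum_prod (hq : ∑ x, q x = 1) : ∑ y : Fin n → Y, ∏ j, q (y j) = 1 := by
  simpa [hq] using sum_prod_mul_prod q (fun (_ : Fin n) _ => (1 : ℝ))

theorem sum_mul_ite_eq (hq : ∑ x, q x = 1) (g : Y → ℝ) (a j : Fin n) :
    ∑ x, q x * (if j = a then g x else 1) = if j = a then ∑ x, q x * g x else 1 := by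
  split_ifs <;> simp [hq]

theorem sum_prod_mul_apply (hq : ∑ x, q x = 1) (g : Y → ℝ) (a : Fin n) :
    ∑ y : Fin n → Y, (∏ j, q (y j)) * g (y a) = ∑ x, q x * g x := by
  have h := sum_prod_mul_prod q (fun j x => if j = a then g x else 1)
  simp only [sum_mul_ite_eq hq, Fintype.prod_ite_eq'] at h
  exact h

theorem sum_prod_mul_apply_mul_apply (hq : ∑ x, q x = 1) (g h : Y → ℝ) {a b : Fin n}
    (hab : a ≠ b) :
    ∑ y : Fin n → Y, (∏ j, q (y j)) * (g (y a) * h (y b)) =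
      (∑ x, q x * g x) * ∑ x, q x * h x := by
  have hfactor (j : Fin n) :
      ∑ x, q x * ((if j = a then g x else 1) * (if j = b then h x else 1)) =
        (if j = a then ∑ x, q x * g x else 1) * (if j = b then ∑ x, q x * h x else 1) := by
    by_cases hja : j = a
    · subst hja; simp [hab]
    · simp only [hja, if_false, one_mul, sum_mul_ite_eq hq]
  have key := sum_prod_mul_prod q
    (fun j x => (if j = a then g x else 1) * (if j = b then h x else 1))
  simp only [hfactor, prod_mul_distrib, Fintype.prod_ite_eq'] at key
  exact key

theorem sum_prod_mul_sum_apply (hq : ∑ x, q x = 1) (f : Y → ℝ) :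
    ∑ y : Fin n → Y, (∏ j, q (y j)) * ∑ j, f (y j) = n * ∑ x, q x * f x := by
  calc ∑ y : Fin n → Y, (∏ j, q (y j)) * ∑ j, f (y j)
      = ∑ j, ∑ y : Fin n → Y, (∏ j, q (y j)) * f (y j) := by simp only [mul_sum]; exact sum_comm
    _ = n * ∑ x, q x * f x := by
      simp only [sum_prod_mul_apply hq, sum_const, card_univ, Fintype.card_fin, nsmul_eq_mul]

theorem sum_prod_mul_sq_sum_apply (hq : ∑ x, q x = 1) {g : Y → ℝ} (hg : ∑ x, q x * g x = 0) :
    ∑ y : Fin n → Y, (∏ j, q (y j)) * (∑ j, g (y j)) ^ 2 = n * ∑ x, q x * g x ^ 2 := by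
  have hpair (a b : Fin n) : ∑ y : Fin n → Y, (∏ j, q (y j)) * (g (y a) * g (y b)) =
      if a = b then ∑ x, q x * g x ^ 2 else 0 := by
    split_ifs with hab
    · subst hab; simp only [← sq]; exact sum_prod_mul_apply hq (fun x => g x ^ 2) a
    · rw [sum_prod_mul_apply_mul_apply hq g g hab, hg, zero_mul]
  have hexpand (y : Fin n → Y) : (∏ j, q (y j)) * (∑ j, g (y j)) ^ 2 =
      ∑ a, ∑ b, (∏ j, q (y j)) * (g (y a) * g (y b)) := by
    rw [sq, sum_mul_sum, mul_sum]
    simp only [mul_sum]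
  rw [sum_congr rfl fun y _ => hexpand y, sum_comm, sum_congr rfl fun a _ => sum_comm]
  simp [hpair]

theorem sum_prod_mul_sq_sub_mean (hq : ∑ x, q x = 1) (f : Y → ℝ) (A B : ℝ) :
    ∑ y : Fin n → Y, (∏ j, q (y j)) * (A * ((∑ j, f (y j)) / n) - B -
        ∑ z : Fin n → Y, (∏ j, q (z j)) * (A * ((∑ j, f (z j)) / n) - B)) ^ 2 =
      A ^ 2 / n * ∑ x, q x * (f x - ∑ x', q x' * f x') ^ 2 := by
  set μ := ∑ x, q x * f x
  have hmean : ∑ z : Fin n → Y, (∏ j, q (z j)) * (A * ((∑ j, f (z j)) / n) - B) =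
      A * (n * μ / n) - B := by
    have hsplit (z : Fin n → Y) : (∏ j, q (z j)) * (A * ((∑ j, f (z j)) / n) - B) =
        A / n * ((∏ j, q (z j)) * ∑ j, f (z j)) - B * ∏ j, q (z j) := by ring
    rw [sum_congr rfl fun z _ => hsplit z, sum_sub_distrib, ← mul_sum, ← mul_sum,
      sum_prod_mul_sum_apply hq, sum_prod hq]
    ring
  have hcenter (y : Fin n → Y) : A * ((∑ j, f (y j)) / n) - B - (A * (n * μ / n) - B) =
      A / n * ∑ j, (f (y j) - μ) := by
    rw [sum_sub_distrib, sum_const, card_univ, Fintype.card_fin, nsmul_eq_mul]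
    ring
  have hg : ∑ x, q x * (f x - μ) = 0 := by
    simp only [mul_sub, sum_sub_distrib, ← sum_mul, hq, one_mul, sub_self, μ]
  simp only [hmean, hcenter, mul_pow, mul_left_comm _ ((A / n) ^ 2), ← mul_sum]
  rw [sum_prod_mul_sq_sum_apply hq hg]
  rcases eq_or_ne (n : ℝ) 0 with hn | hn
  · simp [hn]
  · field_simp

theorem sum_mul_sq_sub_mean_of_mul_self (hq : ∑ x, q x = 1) {f : Y → ℝ}
    (hf : ∀ x, f x * f x = f x) :
    ∑ x, q x * (f x - ∑ x', q x' * f x') ^ 2 =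
      (∑ x, q x * f x) * (1 - ∑ x, q x * f x) := by
  set μ := ∑ x, q x * f x
  have hexpand (x : Y) : q x * (f x - μ) ^ 2 = (1 - 2 * μ) * (q x * f x) + μ ^ 2 * q x := by
    linear_combination q x * hf x
  rw [sum_congr rfl fun x _ => hexpand x, sum_add_distrib, ← mul_sum, ← mul_sum, hq]
  ring

end IID

section Counting

variable {α : Type*} [Fintype α] [DecidableEq α] {d : ℕ}

theorem card_filter_mem_powersetCard_univ (hd : 1 ≤ d) (i : α) :
    #{S ∈ powersetCard d univ | i ∈ S} = (Fintype.card α - 1).choose (d - 1) := by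
  have h := card_filter_powersetCard_subset {i} univ d (subset_univ _) (by simpa using hd)
  simpa only [singleton_subset_iff, card_singleton, card_univ] using h

-- Multiplied out so that it also covers `d = 1`, where `choose (#α - 2) (d - 2)` would be wrong.
theorem card_filter_mem_mem_powersetCard_univ (hd : 1 ≤ d) {i j : α} (hij : i ≠ j) :
    (Fintype.card α - 1) * #{S ∈ powersetCard d univ | i ∈ S ∧ j ∈ S} =
      (d - 1) * (Fintype.card α - 1).choose (d - 1) := by
  obtain rfl | hd2 := eq_or_lt_of_le hd
  · have hempty : {S ∈ powersetCard 1 (univ : Finset α) | i ∈ S ∧ j ∈ S} = ∅ := by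
      simp only [filter_eq_empty_iff, mem_powersetCard_univ, card_eq_one]
      rintro S ⟨a, rfl⟩ ⟨hi, hj⟩
      exact hij ((mem_singleton.1 hi).trans (mem_singleton.1 hj).symm)
    simp [hempty]
  · have hcard : 2 ≤ Fintype.card α := Fintype.one_lt_card_iff.2 ⟨i, j, hij⟩
    have h := card_filter_powersetCard_subset {i, j} univ d (subset_univ _)
      (by rw [card_pair hij]; omega)
    simp only [insert_subset_iff, singleton_subset_iff, card_pair hij, card_univ] at h
    rw [h]
    have := Nat.add_one_mul_choose_eq (Fintype.card α - 2) (d - 2)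
    rw [show Fintype.card α - 2 + 1 = Fintype.card α - 1 by omega,
      show d - 2 + 1 = d - 1 by omega] at this
    rw [this, mul_comm]

theorem sum_powersetCard_univ_ite_mem (hd : 1 ≤ d) (i : α) (a b : ℝ) :
    ∑ S ∈ powersetCard d univ, (if i ∈ S then a else b) =
      (Fintype.card α - 1).choose (d - 1) * a + (Fintype.card α - 1).choose d * b := by
  have hcard : 1 ≤ Fintype.card α := Fintype.card_pos_iff.2 ⟨i⟩
  have hpascal := Nat.choose_succ_succ' (Fintype.card α - 1) (d - 1)
  rw [Nat.sub_add_cancel hcard, Nat.sub_add_cancel hd] at hpascal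
  have hsplit :=
    card_filter_add_card_filter_not (s := powersetCard d (univ : Finset α)) (fun S => i ∈ S)
  rw [card_powersetCard, card_univ, hpascal, card_filter_mem_powersetCard_univ hd] at hsplit
  rw [sum_ite, sum_const, sum_const, card_filter_mem_powersetCard_univ hd,
    show #{S ∈ powersetCard d univ | i ∉ S} = (Fintype.card α - 1).choose d by omega,
    nsmul_eq_mul, nsmul_eq_mul]

end Counting

section Scheme

variable {k d : ℕ}

/-- `y.coord i` is the coordinate `yᵢ` of `y` viewed as a vector in `{0,1}^k`. -/
def Out.coord (y : Out k d) (i : Fin k) : ℝ := if i ∈ y.1 then 1 else 0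

theorem Out.coord_mul_self (y : Out k d) (i : Fin k) : y.coord i * y.coord i = y.coord i := by
  unfold Out.coord
  split_ifs <;> norm_num

theorem tcount_eq_sum_coord {n : ℕ} (i : Fin k) (y : Fin n → Out k d) :
    (tcount i y : ℝ) = ∑ j, (y j).coord i := by
  rw [tcount, card_filter]
  push_cast
  rfl

theorem sum_out_eq_sum_powersetCard (F : Finset (Fin k) → ℝ) :
    ∑ y : Out k d, F y.1 = ∑ S ∈ powersetCard d univ, F S :=
  (sum_subtype _ (fun _ => mem_powersetCard_univ) F).symm

theorem cast_choose_mul_eq (hd : 1 ≤ d) (hdk : d ≤ k) :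
    (d : ℝ) * (k - 1).choose d = (k - d) * (k - 1).choose (d - 1) := by
  have h := Nat.choose_succ_right_eq (k - 1) (d - 1)
  rw [Nat.sub_add_cancel hd, show k - 1 - (d - 1) = k - d by omega] at h
  rw [← Nat.cast_sub hdk]
  exact_mod_cast (mul_comm _ _).trans (h.trans (mul_comm _ _))

theorem choose_mul_exp_add_choose_pos (hd : 1 ≤ d) (hdk : d ≤ k) (ε : ℝ) :
    0 < ((k - 1).choose (d - 1) : ℝ) * Real.exp ε + (k - 1).choose d := by
  have : 0 < (k - 1).choose (d - 1) := Nat.choose_pos (by omega)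
  positivity

theorem sum_schemeP (hd : 1 ≤ d) (hdk : d ≤ k) (ε : ℝ) (v : Fin k) :
    ∑ y : Out k d, schemeP k ε d v y = 1 := by
  unfold schemeP
  rw [sum_out_eq_sum_powersetCard (fun S => (if v ∈ S then Real.exp ε else 1) /
      (((k - 1).choose (d - 1) : ℝ) * Real.exp ε + (k - 1).choose d)), ← sum_div,
    sum_powersetCard_univ_ite_mem hd, Fintype.card_fin, mul_one]
  exact div_self (choose_mul_exp_add_choose_pos hd hdk ε).ne'

theorem sum_schemeP_mul_coord (hd : 1 ≤ d) (ε : ℝ) (v i : Fin k) :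
    ∑ y : Out k d, schemeP k ε d v y * y.coord i =
      ((k - 1).choose (d - 1) + (Real.exp ε - 1) * #{S ∈ powersetCard d univ | i ∈ S ∧ v ∈ S}) /
        (((k - 1).choose (d - 1) : ℝ) * Real.exp ε + (k - 1).choose d) := by
  set Z := ((k - 1).choose (d - 1) : ℝ) * Real.exp ε + (k - 1).choose d
  have hsplit (S : Finset (Fin k)) :
      (if v ∈ S then Real.exp ε else 1) / Z * (if i ∈ S then 1 else 0) =
        ((if i ∈ S then 1 else 0) + (Real.exp ε - 1) * (if i ∈ S ∧ v ∈ S then 1 else 0)) / Z := by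
    by_cases hi : i ∈ S <;> by_cases hv : v ∈ S <;> simp [hi, hv]
  unfold schemeP Out.coord
  rw [sum_out_eq_sum_powersetCard (fun S => (if v ∈ S then Real.exp ε else 1) / Z *
      (if i ∈ S then 1 else 0)), sum_congr rfl fun S _ => hsplit S, ← sum_div, sum_add_distrib,
    ← mul_sum, sum_boole, sum_boole, card_filter_mem_powersetCard_univ hd, Fintype.card_fin]

theorem Aconst_mul_sum_schemeP_mul_coord_sub_Bconst (hd : 1 ≤ d) (hdk : d < k)
    {ε : ℝ} (hε : ε ≠ 0) (v i : Fin k) :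
    Aconst k d ε * ∑ y : Out k d, schemeP k ε d v y * y.coord i - Bconst k d ε =
      if v = i then 1 else 0 := by
  rw [sum_schemeP_mul_coord hd, sub_eq_iff_eq_add, mul_div_assoc',
    div_eq_iff (choose_mul_exp_add_choose_pos hd hdk.le ε).ne']
  set c : ℝ := ↑((k - 1).choose (d - 1))
  have hchoose : ((k - 1).choose d : ℝ) = (k - d) * c / d := by
    rw [eq_div_iff (by positivity), mul_comm, cast_choose_mul_eq hd hdk.le]
  have he : Real.exp ε - 1 ≠ 0 := sub_ne_zero.2 (mt (Real.exp_eq_one_iff ε).1 hε)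
  have hkd : (k : ℝ) - d ≠ 0 := sub_ne_zero.2 (by exact_mod_cast hdk.ne')
  have hk1 : (k : ℝ) - 1 ≠ 0 := sub_ne_zero.2 (by exact_mod_cast (by omega : k ≠ 1))
  have hd0 : (d : ℝ) ≠ 0 := by positivity
  have hpair : (#{S ∈ powersetCard d (univ : Finset (Fin k)) | i ∈ S ∧ v ∈ S} : ℝ) =
      if v = i then c else (d - 1) * c / (k - 1) := by
    split_ifs with hvi
    · subst hvi
      simp only [and_self, card_filter_mem_powersetCard_univ hd, Fintype.card_fin, c]
    · have hN := card_filter_mem_mem_powersetCard_univ (α := Fin k) hd (Ne.symm hvi)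
      rw [Fintype.card_fin] at hN
      rw [eq_div_iff hk1]
      have := congrArg (Nat.cast (R := ℝ)) hN
      push_cast [Nat.cast_sub hd, Nat.cast_sub (by omega : 1 ≤ k)] at this
      linarith
  rw [hpair, hchoose]
  unfold Aconst Bconst
  split_ifs
  · field_simp
    ring
  · field_simp
    ring

variable {ε : ℝ} {p : Fin k → ℝ}

theorem sum_margP (hd : 1 ≤ d) (hdk : d ≤ k) (hp : ∑ v, p v = 1) :
    ∑ y : Out k d, margP k ε d p y = 1 := by
  unfold margP
  rw [sum_comm]
  simp only [← mul_sum, sum_schemeP hd hdk, mul_one, hp]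

theorem Aconst_mul_sum_margP_mul_coord_sub_Bconst (hd : 1 ≤ d) (hdk : d < k) (hε : ε ≠ 0)
    (hp : ∑ v, p v = 1) (i : Fin k) :
    Aconst k d ε * ∑ y : Out k d, margP k ε d p y * y.coord i - Bconst k d ε =
      p i := by
  have hswap : ∑ y : Out k d, margP k ε d p y * y.coord i =
      ∑ v, p v * ∑ y : Out k d, schemeP k ε d v y * y.coord i := by
    simp only [margP, sum_mul, mul_sum, mul_assoc]
    exact sum_comm
  calc Aconst k d ε * ∑ y : Out k d, margP k ε d p y * y.coord i - Bconst k d ε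
      = ∑ v, p v * (Aconst k d ε *
          ∑ y : Out k d, schemeP k ε d v y * y.coord i - Bconst k d ε) := by
        simp only [hswap, mul_sub, sum_sub_distrib, ← sum_mul, hp, mul_sum, mul_left_comm]
        ring
    _ = p i := by
        simp only [Aconst_mul_sum_schemeP_mul_coord_sub_Bconst hd hdk hε, mul_ite, mul_one,
          mul_zero, sum_ite_eq', mem_univ, if_true]

end Scheme

theorem statement13_general (k : ℕ) (ε : ℝ) (hε : 0 < ε) (d n : ℕ)
    (hd1 : 1 ≤ d) (hdk : d ≤ k - 1)
    (p : Fin k → ℝ) (hp : p ∈ simplex k) (i : Fin k) :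
    ∑ y : Fin n → Out k d, (∏ j, margP k ε d p (y j)) *
        (empEst k d n ε y i -
          ∑ z : Fin n → Out k d, (∏ j, margP k ε d p (z j)) * empEst k d n ε z i)^2 =
      (1/(n:ℝ)) * (p i + Bconst k d ε) * (Aconst k d ε - p i - Bconst k d ε) := by
  have hdk' : d < k := by omega
  have hm := sum_margP (ε := ε) hd1 hdk'.le hp.2
  have hunbiased := Aconst_mul_sum_margP_mul_coord_sub_Bconst hd1 hdk' hε.ne' hp.2 i
  simp only [empEst, tcount_eq_sum_coord]
  refine (IID.sum_prod_mul_sq_sub_mean hm (Out.coord · i) _ _).trans ?_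
  rw [IID.sum_mul_sq_sub_mean_of_mul_self hm fun y => y.coord_mul_self i]
  set μ := ∑ y : Out k d, margP k ε d p y * y.coord i
  rw [show Aconst k d ε - p i - Bconst k d ε = Aconst k d ε - (p i + Bconst k d ε) by ring,
    ← sub_eq_iff_eq_add.1 hunbiased]
  ring

theorem statement13 (k : ℕ) (hk : 2 ≤ k) (ε : ℝ) (hε : 0 < ε) (d n : ℕ)
    (hd1 : 1 ≤ d) (hdk : d ≤ k - 1) (hn : 1 ≤ n)
    (p : Fin k → ℝ) (hp : p ∈ simplex k) (i : Fin k) :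
    ∑ y : Fin n → Out k d, (∏ j, margP k ε d p (y j)) *
        (empEst k d n ε y i -
          ∑ z : Fin n → Out k d, (∏ j, margP k ε d p (z j)) * empEst k d n ε z i)^2 =
      (1/(n:ℝ)) * (p i + Bconst k d ε) * (Aconst k d ε - p i - Bconst k d ε) :=
  statement13_general k ε hε d n hd1 hdk p hp i
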